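/- Correctness of the recovery phase (Theorem 2, made explicit): let d be an odd prime, m ≥ 1, and fix shares S, T : Fin m → ZMod d and a recovery vector λ : Fin m → ZMod d, and set s₁ = Σ_j λ j · S j and s₂ = Σ_j λ j · T j. Fix arbitrary q₁, s₃, u₁, u₂, u₃ ∈ ZMod d. Apply to the GHZ state Ψ_{u₁,u₂,u₃} the following operators in order: (i) U_{q₁,q₁} on the first qudit; (ii) U_{λ_j·S_j, λ_j·T_j} on the first qudit for j = 2, …, m; (iii) U_{−u₁, u₂} on the second qudit and U_{0, u₃+s₂−s₃} on the third qudit; (iv) U_{λ₁·S₁−q₁, λ₁·T₁−q₁} on the first qudit. Then the resulting state equals c · Ψ_{s₁,s₂,s₃} for some complex number c with |c| = 1; hence a GHZ-state joint measurement yields the outcome (s₁, s₂, s₃) with certainty. -/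

import Mathlib

/-- ω = exp(2πi/d), the primitive d-th root of unity used throughout. -/
noncomputable def omega (d : ℕ) : ℂ := Complex.exp (2 * Real.pi * Complex.I / d)

/-- The generalized three-qudit GHZ state Ψ_{u₁,u₂,u₃}, modeled as a function
`(ZMod d) × (ZMod d) × (ZMod d) → ℂ`. -/
noncomputable def GHZ3 (d : ℕ) (u₁ u₂ u₃ : ZMod d) :
    ZMod d × ZMod d × ZMod d → ℂ := fun p =>
  if p.2.1 = p.1 + u₂ ∧ p.2.2 = p.1 + u₃ then
    (1 / Real.sqrt d : ℂ) * omega d ^ (p.1 * u₁).val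
  else 0

/-- The generalized Pauli operator `U_{α,β}` applied to the first qudit. -/
noncomputable def pauliFst (d : ℕ) (α β : ZMod d)
    (f : ZMod d × ZMod d × ZMod d → ℂ) : ZMod d × ZMod d × ZMod d → ℂ :=
  fun p => omega d ^ (p.1 * α).val * f (p.1 + β, p.2.1, p.2.2)

/-- The generalized Pauli operator `U_{α,β}` applied to the second qudit. -/
noncomputable def pauliSnd (d : ℕ) (α β : ZMod d)
    (f : ZMod d × ZMod d × ZMod d → ℂ) : ZMod d × ZMod d × ZMod d → ℂ :=
  fun p => omega d ^ (p.2.1 * α).val * f (p.1, p.2.1 + β, p.2.2)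

/-- The generalized Pauli operator `U_{α,β}` applied to the third qudit. -/
noncomputable def pauliTrd (d : ℕ) (α β : ZMod d)
    (f : ZMod d × ZMod d × ZMod d → ℂ) : ZMod d × ZMod d × ZMod d → ℂ :=
  fun p => omega d ^ (p.2.2 * α).val * f (p.1, p.2.1, p.2.2 + β)

/-!
Each generalized Pauli operator maps a GHZ state to a GHZ state times a phase: `U_{α,β}` on the
first qudit shifts the labels `(u₁, u₂, u₃)` by `(α, β, β)`, on the second by `(α, -β, 0)`, on
the third by `(α, 0, -β)`; the phase is a power of `ω`, and `ω ^ x.val` is additive in `x` because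
`ω ^ d = 1`. Following the labels through the recovery phase, the random numbers `q₁` and the
initial labels cancel, and the shifts `λ_j S_j`, `λ_j T_j` add up to `s₁` and `s₂`.
-/

theorem omega_pow_val_add (d : ℕ) (a b : ZMod d) :
    omega d ^ (a + b).val = omega d ^ a.val * omega d ^ b.val := by
  rcases Nat.eq_zero_or_pos d with rfl | hd
  · simp [omega] -- `omega 0 = exp 0 = 1`, as division by `0` gives `0`
  have : NeZero d := ⟨hd.ne'⟩
  have hself : omega d ^ d = 1 := by
    rw [omega, ← Complex.exp_nat_mul, mul_div_cancel₀ _ (by exact_mod_cast hd.ne'),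
      Complex.exp_two_pi_mul_I]
  rw [ZMod.val_add, ← pow_add, ← Nat.mod_add_div (a.val + b.val) d, pow_add, pow_mul, hself,
    one_pow, mul_one, Nat.mod_add_div]

theorem norm_omega (d : ℕ) : ‖omega d‖ = 1 := by
  rw [omega, Complex.norm_exp]
  simp

theorem sum_map_drop_one_finRange {M : Type*} [AddCommMonoid M] {m : ℕ} [NeZero m]
    (f : Fin m → M) : f 0 + (((List.finRange m).drop 1).map f).sum = ∑ j, f j := by
  obtain ⟨n, rfl⟩ := Nat.exists_eq_succ_of_ne_zero (NeZero.ne m)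
  rw [Fin.sum_univ_succ, Fin.sum_univ_def, List.finRange_succ, List.drop_one, List.tail_cons,
    List.map_map]
  rfl

def EqUpToPhase {X : Type*} (f g : X → ℂ) : Prop := ∃ c : ℂ, ‖c‖ = 1 ∧ f = c • g

theorem EqUpToPhase.refl {X : Type*} (f : X → ℂ) : EqUpToPhase f f :=
    ⟨1, norm_one, (one_smul ℂ f).symm⟩

section

variable {d : ℕ}

theorem pauliFst_GHZ3 (α β u₁ u₂ u₃ : ZMod d) :
    pauliFst d α β (GHZ3 d u₁ u₂ u₃)
      = omega d ^ (β * u₁).val • GHZ3 d (u₁ + α) (u₂ + β) (u₃ + β) := by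
  funext ⟨j₁, j₂, j₃⟩
  simp only [pauliFst, GHZ3, Pi.smul_apply, smul_eq_mul]
  rw [add_assoc, add_assoc, add_comm β, add_comm β]
  split_ifs
  · rw [mul_left_comm, ← omega_pow_val_add, mul_left_comm, ← omega_pow_val_add]
    ring_nf
  · simp

theorem pauliSnd_GHZ3 (α β u₁ u₂ u₃ : ZMod d) :
    pauliSnd d α β (GHZ3 d u₁ u₂ u₃)
      = omega d ^ ((u₂ - β) * α).val • GHZ3 d (u₁ + α) (u₂ - β) u₃ := by
  funext ⟨j₁, j₂, j₃⟩
  simp only [pauliSnd, GHZ3, Pi.smul_apply, smul_eq_mul, ← eq_sub_iff_add_eq, add_sub_assoc]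
  split_ifs with h
  · obtain ⟨rfl, -⟩ := h
    rw [mul_left_comm, ← omega_pow_val_add, mul_left_comm, ← omega_pow_val_add]
    ring_nf
  · simp

theorem pauliTrd_GHZ3 (α β u₁ u₂ u₃ : ZMod d) :
    pauliTrd d α β (GHZ3 d u₁ u₂ u₃)
      = omega d ^ ((u₃ - β) * α).val • GHZ3 d (u₁ + α) u₂ (u₃ - β) := by
  funext ⟨j₁, j₂, j₃⟩
  simp only [pauliTrd, GHZ3, Pi.smul_apply, smul_eq_mul, ← eq_sub_iff_add_eq, add_sub_assoc]
  split_ifs with h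
  · obtain ⟨-, rfl⟩ := h
    rw [mul_left_comm, ← omega_pow_val_add, mul_left_comm, ← omega_pow_val_add]
    ring_nf
  · simp

theorem pauliFst_smul (α β : ZMod d) (c : ℂ) (f : ZMod d × ZMod d × ZMod d → ℂ) :
    pauliFst d α β (c • f) = c • pauliFst d α β f := by
  funext p; simp only [pauliFst, Pi.smul_apply, smul_eq_mul]; ring

theorem pauliSnd_smul (α β : ZMod d) (c : ℂ) (f : ZMod d × ZMod d × ZMod d → ℂ) :
    pauliSnd d α β (c • f) = c • pauliSnd d α β f := by
  funext p; simp only [pauliSnd, Pi.smul_apply, smul_eq_mul]; ring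

theorem pauliTrd_smul (α β : ZMod d) (c : ℂ) (f : ZMod d × ZMod d × ZMod d → ℂ) :
    pauliTrd d α β (c • f) = c • pauliTrd d α β f := by
  funext p; simp only [pauliTrd, Pi.smul_apply, smul_eq_mul]; ring

variable {f : ZMod d × ZMod d × ZMod d → ℂ} {a b e : ZMod d}

theorem EqUpToPhase.pauliFst_GHZ3 (h : EqUpToPhase f (GHZ3 d a b e)) (α β : ZMod d) :
    EqUpToPhase (pauliFst d α β f) (GHZ3 d (a + α) (b + β) (e + β)) := by
  obtain ⟨c, hc, rfl⟩ := h
  exact ⟨c * omega d ^ (β * a).val, by simp [hc, norm_omega],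
    by rw [pauliFst_smul, _root_.pauliFst_GHZ3, smul_smul]⟩

theorem EqUpToPhase.pauliSnd_GHZ3 (h : EqUpToPhase f (GHZ3 d a b e)) (α β : ZMod d) :
    EqUpToPhase (pauliSnd d α β f) (GHZ3 d (a + α) (b - β) e) := by
  obtain ⟨c, hc, rfl⟩ := h
  exact ⟨c * omega d ^ ((b - β) * α).val, by simp [hc, norm_omega],
    by rw [pauliSnd_smul, _root_.pauliSnd_GHZ3, smul_smul]⟩

theorem EqUpToPhase.pauliTrd_GHZ3 (h : EqUpToPhase f (GHZ3 d a b e)) (α β : ZMod d) :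
    EqUpToPhase (pauliTrd d α β f) (GHZ3 d (a + α) b (e - β)) := by
  obtain ⟨c, hc, rfl⟩ := h
  exact ⟨c * omega d ^ ((e - β) * α).val, by simp [hc, norm_omega],
    by rw [pauliTrd_smul, _root_.pauliTrd_GHZ3, smul_smul]⟩

theorem EqUpToPhase.foldl_pauliFst_GHZ3 {ι : Type*} (h : EqUpToPhase f (GHZ3 d a b e))
    (l : List ι) (α β : ι → ZMod d) :
    EqUpToPhase (l.foldl (fun f j => pauliFst d (α j) (β j) f) f)
      (GHZ3 d (a + (l.map α).sum) (b + (l.map β).sum) (e + (l.map β).sum)) := by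
  induction l generalizing f a b e with
  | nil => simpa using h
  | cons j l ih => simpa [add_assoc] using ih (h.pauliFst_GHZ3 (α j) (β j))

end

theorem recovery_correct_general (d : ℕ) (m : ℕ) [NeZero m]
    (S T lam : Fin m → ZMod d) (s₁ s₂ : ZMod d)
    (hs₁ : s₁ = ∑ j, lam j * S j) (hs₂ : s₂ = ∑ j, lam j * T j)
    (q₁ s₃ u₁ u₂ u₃ : ZMod d) :
    ∃ c : ℂ, ‖c‖ = 1 ∧
      pauliFst d (lam 0 * S 0 - q₁) (lam 0 * T 0 - q₁)
        (pauliTrd d 0 (u₃ + s₂ - s₃)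
          (pauliSnd d (-u₁) u₂
            (((List.finRange m).drop 1).foldl
              (fun f j => pauliFst d (lam j * S j) (lam j * T j) f)
              (pauliFst d q₁ q₁ (GHZ3 d u₁ u₂ u₃))))) =
        c • GHZ3 d s₁ s₂ s₃ := by
  have hS := sum_map_drop_one_finRange fun j => lam j * S j
  have hT := sum_map_drop_one_finRange fun j => lam j * T j
  have h := (EqUpToPhase.refl (GHZ3 d u₁ u₂ u₃)).pauliFst_GHZ3 q₁ q₁
    |>.foldl_pauliFst_GHZ3 ((List.finRange m).drop 1) (fun j => lam j * S j) (fun j => lam j * T j)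
    |>.pauliSnd_GHZ3 (-u₁) u₂
    |>.pauliTrd_GHZ3 0 (u₃ + s₂ - s₃)
    |>.pauliFst_GHZ3 (lam 0 * S 0 - q₁) (lam 0 * T 0 - q₁)
  show EqUpToPhase _ (GHZ3 d s₁ s₂ s₃)
  convert h using 2
  · linear_combination hs₁ - hS
  · linear_combination hs₂ - hT
  · linear_combination hs₂ - hT

/-- Correctness of the recovery phase (Theorem 2, made explicit).  Starting from the GHZ state
`Ψ_{u₁,u₂,u₃}`, apply in order: (i) `U_{q₁,q₁}` on the first qudit; (ii) `U_{λ_j·S_j, λ_j·T_j}`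
on the first qudit for the participants `j = 2, …, m` (indices `j ≠ 0` of `Fin m`);
(iii) `U_{−u₁,u₂}` on the second qudit and `U_{0, u₃+s₂−s₃}` on the third qudit;
(iv) `U_{λ₁·S₁−q₁, λ₁·T₁−q₁}` on the first qudit.  The result is `c • Ψ_{s₁,s₂,s₃}` with
`|c| = 1`, where `s₁ = Σ_j λ_j·S_j` and `s₂ = Σ_j λ_j·T_j`; hence a GHZ-state joint
measurement yields the outcome `(s₁, s₂, s₃)` with certainty. -/
theorem recovery_correct (d : ℕ) (hd : d.Prime) (hodd : Odd d) (m : ℕ) [NeZero m]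
    (S T lam : Fin m → ZMod d) (s₁ s₂ : ZMod d)
    (hs₁ : s₁ = ∑ j, lam j * S j) (hs₂ : s₂ = ∑ j, lam j * T j)
    (q₁ s₃ u₁ u₂ u₃ : ZMod d) :
    ∃ c : ℂ, ‖c‖ = 1 ∧
      pauliFst d (lam 0 * S 0 - q₁) (lam 0 * T 0 - q₁)
        (pauliTrd d 0 (u₃ + s₂ - s₃)
          (pauliSnd d (-u₁) u₂
            (((List.finRange m).drop 1).foldl
              (fun f j => pauliFst d (lam j * S j) (lam j * T j) f)
              (pauliFst d q₁ q₁ (GHZ3 d u₁ u₂ u₃))))) =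
        c • GHZ3 d s₁ s₂ s₃ :=
  recovery_correct_general d m S T lam s₁ s₂ hs₁ hs₂ q₁ s₃ u₁ u₂ u₃
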